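/- Let C₀, η₁ > 0, ρ, θ ∈ (0,1), 𝔭 ∈ (−1,0), ρ < (1−θ)^{1+𝔭}, ζ = log(1−θ)/log ρ, and let u : Q₁ → ℝ. Suppose for every j ∈ ℕ there exists ℓ_j ∈ ℝⁿ with |ℓ_j| ≤ C₀(1−θ)^j, |ℓ_{j+1}−ℓ_j| ≤ C₀(1−θ)^j, and osc over Q_{ρ^j}^{(1−θ)^j} of (u(x,t) − ℓ_j·x) is at most η₁ ρ^j (1−θ)^j, where Q_r^λ = B_r × (−r²λ^{−𝔭}, 0]. Then with ℓ_∞ = lim ℓ_j there is a constant C depending only on C₀, η₁, ρ, θ such that |u(x,t) − u(0,0) − ℓ_∞·x| ≤ C(|x|^{1+ζ} + |t|^{(1+ζ)/(2−ζ𝔭)}) for all (x,t) ∈ Q_ρ^{(1−θ)}. -/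

import Mathlib

/-!
Subtracting the `j`-th slope, `u` is flat to order `(ρ(1-θ))^j = ρ^((1+ζ) j)` on the `j`-th
cylinder, which has radius `ρ^j` and height `q^j` with `q = ρ²(1-θ)^(-p) = ρ^(2-ζp)`. The slopes
converge geometrically, so `ℓ_∞` may replace `ℓ_j` at a cost `C₀(1-θ)^j/θ · ρ^j` of the same
order. A point `z ≠ 0` lies in the `j`-th cylinder but not in the `(j+1)`-th one for some `j`;
then `ρ^(j+1) ≤ |x|` or `q^(j+1) ≤ |t|`, and either bounds `ρ^((1+ζ)(j+1))` by
`|x|^(1+ζ) + |t|^((1+ζ)/(2-ζp))`.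
-/

open Filter

section ParabolicCylinder

variable {E : Type*} [NormedAddCommGroup E]

def parabolicCylinder (r h : ℝ) : Set (E × ℝ) :=
  {z | ‖z.1‖ < r ∧ z.2 ∈ Set.Ioc (-h) 0}

lemma mem_parabolicCylinder {r h : ℝ} {z : E × ℝ} :
    z ∈ parabolicCylinder r h ↔ ‖z.1‖ < r ∧ -h < z.2 ∧ z.2 ≤ 0 :=
  Iff.rfl

lemma zero_mem_parabolicCylinder {r h : ℝ} (hr : 0 < r) (hh : 0 < h) :
    (0 : E × ℝ) ∈ parabolicCylinder r h :=
  ⟨by simpa using hr, by simpa using hh, le_rfl⟩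

lemma parabolicCylinder_mono {r r' h h' : ℝ} (hr : r ≤ r') (hh : h ≤ h') :
    (parabolicCylinder r h : Set (E × ℝ)) ⊆ parabolicCylinder r' h' :=
  fun _ ⟨hx, ht, ht0⟩ => ⟨hx.trans_le hr, by linarith, ht0⟩

lemma le_norm_or_le_abs_of_notMem_parabolicCylinder {r h : ℝ} {z : E × ℝ} (ht : z.2 ≤ 0)
    (hz : z ∉ parabolicCylinder r h) : r ≤ ‖z.1‖ ∨ h ≤ |z.2| := by
  rw [mem_parabolicCylinder] at hz
  rw [abs_of_nonpos ht]
  by_contra! h'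
  exact hz ⟨h'.1, by linarith, ht⟩

lemma exists_mem_parabolicCylinder_pow_notMem_succ {ρ q : ℝ} (hρ : ρ < 1) (hq : q < 1)
    {z : E × ℝ} (hz : z ∈ parabolicCylinder 1 1) (hz0 : z ≠ 0) :
    ∃ j : ℕ, z ∈ parabolicCylinder (ρ ^ j) (q ^ j) ∧
      z ∉ parabolicCylinder (ρ ^ (j + 1)) (q ^ (j + 1)) := by
  classical
  have hexit : ∃ N : ℕ, z ∉ parabolicCylinder (ρ ^ N) (q ^ N) := by
    by_cases hx : z.1 = 0
    · have ht : 0 < |z.2| := abs_pos.2 fun ht => hz0 (Prod.ext hx ht)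
      obtain ⟨N, hN⟩ := exists_pow_lt_of_lt_one ht hq
      refine ⟨N, fun hzN => ?_⟩
      rw [abs_of_nonpos hzN.2.2] at hN
      linarith [hzN.2.1]
    · obtain ⟨N, hN⟩ := exists_pow_lt_of_lt_one (norm_pos_iff.2 hx) hρ
      exact ⟨N, fun hzN => hzN.1.not_gt hN⟩
  have hfind : Nat.find hexit ≠ 0 := fun h0 => Nat.find_spec hexit (by rwa [h0, pow_zero, pow_zero])
  obtain ⟨j, hj⟩ := Nat.exists_eq_add_one_of_ne_zero hfind
  exact ⟨j, not_not.1 (Nat.find_min hexit (by omega)), by rw [← hj]; exact Nat.find_spec hexit⟩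

/-- The paper's intrinsic cylinder `Q_r^λ`. -/
def intrinsicCylinder (p r lam : ℝ) : Set (E × ℝ) :=
  parabolicCylinder r (r ^ 2 * lam ^ (-p))

lemma intrinsicCylinder_pow {p ρ lam : ℝ} (hlam : 0 ≤ lam) (j : ℕ) :
    (intrinsicCylinder p (ρ ^ j) (lam ^ j) : Set (E × ℝ)) =
      parabolicCylinder (ρ ^ j) ((ρ ^ 2 * lam ^ (-p)) ^ j) := by
  rw [intrinsicCylinder, mul_pow, ← Real.rpow_pow_comm hlam, ← pow_mul, ← pow_mul, mul_comm j 2]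

end ParabolicCylinder

lemma rpow_le_rpow_add_rpow_of_le_or_le {s s' x t γ α : ℝ} (hs : 0 ≤ s) (hs' : 0 ≤ s')
    (hx : 0 ≤ x) (ht : 0 ≤ t) (hγ : 0 ≤ γ) (hα : 0 ≤ α) (hss' : s' ^ α = s ^ γ)
    (hle : s ≤ x ∨ s' ≤ t) : s ^ γ ≤ x ^ γ + t ^ α := by
  rcases hle with hsx | hst
  · linarith [Real.rpow_le_rpow hs hsx hγ, Real.rpow_nonneg ht α]
  · rw [← hss']
    linarith [Real.rpow_le_rpow hs' hst hα, Real.rpow_nonneg hx γ]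

theorem abs_le_of_forall_mem_parabolicCylinder_pow {E : Type*} [NormedAddCommGroup E]
    {f : E × ℝ → ℝ} {ρ q γ α M : ℝ} (hρ0 : 0 < ρ) (hρ1 : ρ < 1) (hq0 : 0 ≤ q) (hq1 : q < 1)
    (hγ : 0 ≤ γ) (hα : 0 ≤ α) (hqα : q ^ α = ρ ^ γ) (hM : 0 ≤ M) (hf0 : f 0 = 0)
    (hf : ∀ j : ℕ, ∀ z ∈ parabolicCylinder (ρ ^ j) (q ^ j), |f z| ≤ M * (ρ ^ γ) ^ j)
    {z : E × ℝ} (hz : z ∈ parabolicCylinder 1 1) :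
    |f z| ≤ M / ρ ^ γ * (‖z.1‖ ^ γ + |z.2| ^ α) := by
  rcases eq_or_ne z 0 with rfl | hz0
  · rw [hf0, abs_zero]
    positivity
  obtain ⟨j, hj, hj1⟩ := exists_mem_parabolicCylinder_pow_notMem_succ hρ1 hq1 hz hz0
  have hscale : (q ^ (j + 1)) ^ α = (ρ ^ (j + 1)) ^ γ := by
    rw [← Real.rpow_pow_comm hq0, hqα, Real.rpow_pow_comm hρ0.le]
  have hργ : 0 < ρ ^ γ := Real.rpow_pos_of_pos hρ0 γ
  calc |f z| ≤ M * (ρ ^ γ) ^ j := hf j z hj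
    _ = M / ρ ^ γ * (ρ ^ (j + 1)) ^ γ := by
      rw [← Real.rpow_pow_comm hρ0.le, pow_succ]
      field_simp
    _ ≤ M / ρ ^ γ * (‖z.1‖ ^ γ + |z.2| ^ α) := by
      gcongr
      exact rpow_le_rpow_add_rpow_of_le_or_le (by positivity) (by positivity) (norm_nonneg _)
        (abs_nonneg _) hγ hα hscale (le_norm_or_le_abs_of_notMem_parabolicCylinder hz.2.2 hj1)

lemma abs_sub_inner_le_add {F : Type*} [NormedAddCommGroup F] [InnerProductSpace ℝ F]
    {a η δ r : ℝ} {ℓ ℓ' x : F} (ha : |a - inner ℝ ℓ' x| ≤ η) (hℓ : ‖ℓ - ℓ'‖ ≤ δ)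
    (hx : ‖x‖ ≤ r) : |a - inner ℝ ℓ x| ≤ η + δ * r := by
  have hδ : 0 ≤ δ := (norm_nonneg _).trans hℓ
  calc |a - inner ℝ ℓ x| = |(a - inner ℝ ℓ' x) - inner ℝ (ℓ - ℓ') x| := by
        rw [inner_sub_left]; ring_nf
    _ ≤ |a - inner ℝ ℓ' x| + |inner ℝ (ℓ - ℓ') x| := abs_sub _ _
    _ ≤ η + δ * r := add_le_add ha ((abs_real_inner_le_norm _ _).trans
        (mul_le_mul hℓ hx (norm_nonneg _) hδ))

lemma norm_sub_le_of_norm_succ_sub_le_geometric {F : Type*} [SeminormedAddCommGroup F]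
    {ℓ : ℕ → F} {ℓlim : F} {C r : ℝ} (hr : r < 1) (hstep : ∀ m : ℕ, ‖ℓ (m + 1) - ℓ m‖ ≤ C * r ^ m)
    (hlim : Tendsto ℓ atTop (nhds ℓlim)) (j : ℕ) : ‖ℓlim - ℓ j‖ ≤ C * r ^ j / (1 - r) := by
  have := dist_le_of_le_geometric_of_tendsto r C hr
    (fun m => by rw [dist_comm, dist_eq_norm]; exact hstep m) hlim j
  rwa [dist_comm, dist_eq_norm] at this

lemma abs_sub_sub_inner_le_of_tendsto {F : Type*} [NormedAddCommGroup F] [InnerProductSpace ℝ F]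
    {u : F × ℝ → ℝ} {ℓ : ℕ → F} {ℓlim : F} {S : Set (F × ℝ)} {C η r R : ℝ} {j : ℕ} (hr : r < 1)
    (hstep : ∀ m : ℕ, ‖ℓ (m + 1) - ℓ m‖ ≤ C * r ^ m) (hlim : Tendsto ℓ atTop (nhds ℓlim))
    (hosc : ∀ z ∈ S, ∀ w ∈ S, (u z - inner ℝ (ℓ j) z.1) - (u w - inner ℝ (ℓ j) w.1) ≤ η)
    (h0 : (0 : F × ℝ) ∈ S) {z : F × ℝ} (hz : z ∈ S) (hzR : ‖z.1‖ ≤ R) :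
    |u z - u 0 - inner ℝ ℓlim z.1| ≤ η + C * r ^ j / (1 - r) * R := by
  refine abs_sub_inner_le_add ?_ (norm_sub_le_of_norm_succ_sub_le_geometric hr hstep hlim j) hzR
  simpa [sub_right_comm] using abs_sub_le_iff.2 ⟨hosc z hz 0 h0, hosc 0 h0 z hz⟩

lemma sq_mul_rpow_neg_eq_rpow {ρ lam ζ : ℝ} (hρ : 0 < ρ) (hρζ : ρ ^ ζ = lam) (p : ℝ) :
    ρ ^ 2 * lam ^ (-p) = ρ ^ (2 - ζ * p) := by
  rw [← hρζ, ← Real.rpow_mul hρ.le, ← Real.rpow_natCast, ← Real.rpow_add hρ]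
  ring_nf

theorem stmt16_general (n : ℕ) (C₀ η₁ ρ θ p ζ : ℝ)
    (hC₀ : 0 < C₀) (hη₁ : 0 < η₁)
    (hρ : ρ ∈ Set.Ioo (0 : ℝ) 1) (hθ : θ ∈ Set.Ioo (0 : ℝ) 1)
    (hp : p ∈ Set.Ioo (-1 : ℝ) 0)
    (hζ : ζ = Real.log (1 - θ) / Real.log ρ)
    (Qcyl : ℝ → ℝ → Set (EuclideanSpace ℝ (Fin n) × ℝ))
    (hQcyl : Qcyl = fun r lam =>
      {z | ‖z.1‖ < r ∧ z.2 ∈ Set.Ioc (-(r ^ 2 * lam ^ (-p))) 0})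
    (u : EuclideanSpace ℝ (Fin n) × ℝ → ℝ)
    (ℓ : ℕ → EuclideanSpace ℝ (Fin n))
    (hstep : ∀ j : ℕ, ‖ℓ (j + 1) - ℓ j‖ ≤ C₀ * (1 - θ) ^ j)
    (hosc : ∀ j : ℕ, ∀ z ∈ Qcyl (ρ ^ j) ((1 - θ) ^ j), ∀ w ∈ Qcyl (ρ ^ j) ((1 - θ) ^ j),
      (u z - inner ℝ (ℓ j) z.1) - (u w - inner ℝ (ℓ j) w.1) ≤ η₁ * ρ ^ j * (1 - θ) ^ j)
    (ℓlim : EuclideanSpace ℝ (Fin n)) (hlim : Tendsto ℓ atTop (nhds ℓlim)) :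
    ∃ C : ℝ, 0 < C ∧ ∀ z ∈ Qcyl ρ (1 - θ),
      |u z - u (0, 0) - inner ℝ ℓlim z.1| ≤
        C * (‖z.1‖ ^ (1 + ζ) + |z.2| ^ ((1 + ζ) / (2 - ζ * p))) := by
  obtain ⟨hρ0, hρ1⟩ := hρ
  obtain ⟨hθ0, hθ1⟩ := hθ
  rw [show Qcyl = intrinsicCylinder p from hQcyl] at hosc ⊢
  rw [Prod.mk_zero_zero]
  have hρζ : ρ ^ ζ = 1 - θ := hζ ▸ Real.rpow_logb hρ0 hρ1.ne (by linarith)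
  have hζ_pos : 0 < ζ := hζ ▸ div_pos_of_neg_of_neg (Real.log_neg (by linarith) (by linarith))
    (Real.log_neg hρ0 hρ1)
  have hβ : 0 < 2 - ζ * p := by linarith [mul_neg_of_pos_of_neg hζ_pos hp.2]
  set q := ρ ^ (2 - ζ * p)
  have hQ (j : ℕ) : (intrinsicCylinder p (ρ ^ j) ((1 - θ) ^ j) : Set (EuclideanSpace ℝ (Fin n) × ℝ))
      = parabolicCylinder (ρ ^ j) (q ^ j) := by
    rw [intrinsicCylinder_pow (by linarith), sq_mul_rpow_neg_eq_rpow hρ0 hρζ]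
  have hq1 : q < 1 := Real.rpow_lt_one hρ0.le hρ1 hβ
  have hflat (j : ℕ) : ∀ z ∈ parabolicCylinder (ρ ^ j) (q ^ j),
      |u z - u 0 - inner ℝ ℓlim z.1| ≤ (η₁ + C₀ / θ) * (ρ ^ (1 + ζ)) ^ j := by
    intro z hz
    calc |u z - u 0 - inner ℝ ℓlim z.1|
        ≤ η₁ * ρ ^ j * (1 - θ) ^ j + C₀ * (1 - θ) ^ j / (1 - (1 - θ)) * ρ ^ j :=
          abs_sub_sub_inner_le_of_tendsto (by linarith) hstep hlim (hosc j)
            (hQ j ▸ zero_mem_parabolicCylinder (by positivity) (by positivity)) (hQ j ▸ hz) hz.1.le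
      _ = (η₁ + C₀ / θ) * (ρ ^ (1 + ζ)) ^ j := by
          rw [sub_sub_cancel, Real.rpow_add hρ0, Real.rpow_one, hρζ, mul_pow]
          ring
  refine ⟨(η₁ + C₀ / θ) / ρ ^ (1 + ζ), by positivity, fun z hz => ?_⟩
  have hQ1 := hQ 1
  simp only [pow_one] at hQ1
  have hz1 : z ∈ parabolicCylinder 1 1 := parabolicCylinder_mono hρ1.le hq1.le (hQ1 ▸ hz)
  exact abs_le_of_forall_mem_parabolicCylinder_pow hρ0 hρ1 (by positivity) hq1 (by positivity)
    (by positivity) (by rw [← Real.rpow_mul hρ0.le, mul_div_cancel₀ _ hβ.ne']) (by positivity)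
    (by simp) hflat hz1

/-- Campanato-type iteration to a pointwise `C^{1+ζ}` estimate at the origin. -/
theorem stmt16 (n : ℕ) (C₀ η₁ ρ θ p ζ : ℝ)
    (hC₀ : 0 < C₀) (hη₁ : 0 < η₁)
    (hρ : ρ ∈ Set.Ioo (0 : ℝ) 1) (hθ : θ ∈ Set.Ioo (0 : ℝ) 1)
    (hp : p ∈ Set.Ioo (-1 : ℝ) 0) (hρθ : ρ < (1 - θ) ^ (1 + p))
    (hζ : ζ = Real.log (1 - θ) / Real.log ρ)
    (Qcyl : ℝ → ℝ → Set (EuclideanSpace ℝ (Fin n) × ℝ))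
    (hQcyl : Qcyl = fun r lam =>
      {z | ‖z.1‖ < r ∧ z.2 ∈ Set.Ioc (-(r ^ 2 * lam ^ (-p))) 0})
    (u : EuclideanSpace ℝ (Fin n) × ℝ → ℝ)
    (ℓ : ℕ → EuclideanSpace ℝ (Fin n))
    (hbd : ∀ j : ℕ, ‖ℓ j‖ ≤ C₀ * (1 - θ) ^ j)
    (hstep : ∀ j : ℕ, ‖ℓ (j + 1) - ℓ j‖ ≤ C₀ * (1 - θ) ^ j)
    (hosc : ∀ j : ℕ, ∀ z ∈ Qcyl (ρ ^ j) ((1 - θ) ^ j), ∀ w ∈ Qcyl (ρ ^ j) ((1 - θ) ^ j),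
      (u z - inner ℝ (ℓ j) z.1) - (u w - inner ℝ (ℓ j) w.1) ≤ η₁ * ρ ^ j * (1 - θ) ^ j)
    (ℓlim : EuclideanSpace ℝ (Fin n)) (hlim : Tendsto ℓ atTop (nhds ℓlim)) :
    ∃ C : ℝ, 0 < C ∧ ∀ z ∈ Qcyl ρ (1 - θ),
      |u z - u (0, 0) - inner ℝ ℓlim z.1| ≤
        C * (‖z.1‖ ^ (1 + ζ) + |z.2| ^ ((1 + ζ) / (2 - ζ * p))) :=
  stmt16_general n C₀ η₁ ρ θ p ζ hC₀ hη₁ hρ hθ hp hζ Qcyl hQcyl u ℓ hstep hosc ℓlim hlim
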